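/- Let G, G' be groups with ψ ∈ Aut(G), ψ' ∈ Aut(G'), and P, P' the orbits of the identities under the inner automorphism groups of Q(G,ψ), Q(G',ψ'). Then Q(G,ψ) ≅ Q(G',ψ') as quandles if and only if there exists a group isomorphism h : P → P' with h ∘ ψ|_P = ψ'|_{P'} ∘ h, together with representatives A ⊆ G, A' ⊆ G' of G/P, G'/P' and a bijection k : A → A' satisfying h(e * a) = e' *' k(a) for all a ∈ A. -/

import Mathlib

/-- The generalized Alexander quandle operation on a group `G` with automorphism `ψ`. -/
def gaOp {G : Type*} [Group G] (ψ : G ≃* G) (x y : G) : G := y * ψ (y⁻¹ * x)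

/-- The point symmetry `s_y : x ↦ x * y = y·ψ(y⁻¹x)` as a permutation of `G`. -/
def ptSym {G : Type*} [Group G] (ψ : G ≃* G) (y : G) : Equiv.Perm G :=
  (Equiv.mulLeft y⁻¹).trans (ψ.toEquiv.trans (Equiv.mulLeft y))

/-- The inner automorphism group of `Q(G,ψ)`: the group of permutations of `G`
generated by the point symmetries. -/
def innGroup {G : Type*} [Group G] (ψ : G ≃* G) : Subgroup (Equiv.Perm G) :=
  Subgroup.closure (Set.range (ptSym ψ))

/-- `P(Q(G,ψ))`: the orbit of the identity element under `Inn(Q(G,ψ))`. -/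
def innOrbit {G : Type*} [Group G] (ψ : G ≃* G) : Set G :=
  {g | ∃ f ∈ innGroup ψ, f 1 = g}

/-- `A` is a set of representatives of the left cosets of the subset `P` of `G`:
every `x ∈ G` decomposes uniquely as `x = a * p` with `a ∈ A`, `p ∈ P`. -/
def IsCosetRep {G : Type*} [Group G] (A P : Set G) : Prop :=
  ∀ x : G, ∃! a : G, a ∈ A ∧ ∃ p ∈ P, x = a * p

section Aux

variable {G : Type*} [Group G] (ψ : G ≃* G)

/-- The subgroup generated by the elements `y * ψ y⁻¹`. -/
def orbN : Subgroup G := Subgroup.closure (Set.range fun y => y * ψ y⁻¹)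

variable {ψ}

lemma ptSym_apply (y x : G) : ptSym ψ y x = (y * ψ y⁻¹) * ψ x := by
  simp [ptSym, map_mul, mul_assoc]

lemma psi_mem_orbN {g : G} (hg : g ∈ orbN ψ) : ψ g ∈ orbN ψ := by
  have : (orbN ψ).map ψ.toMonoidHom ≤ orbN ψ := by
    rw [orbN, MonoidHom.map_closure]
    apply Subgroup.closure_le _ |>.2
    rintro _ ⟨_, ⟨y, rfl⟩, rfl⟩
    exact Subgroup.subset_closure ⟨ψ y, by simp [map_mul]⟩
  exact this ⟨g, hg, rfl⟩

lemma psi_symm_mem_orbN {g : G} (hg : g ∈ orbN ψ) : ψ.symm g ∈ orbN ψ := by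
  have : (orbN ψ).map ψ.symm.toMonoidHom ≤ orbN ψ := by
    rw [orbN, MonoidHom.map_closure]
    apply Subgroup.closure_le _ |>.2
    rintro _ ⟨_, ⟨y, rfl⟩, rfl⟩
    have : ψ.symm (y * ψ y⁻¹) = ψ.symm y * ψ (ψ.symm y)⁻¹ := by
      simp [map_mul]
    exact this ▸ Subgroup.subset_closure ⟨ψ.symm y, rfl⟩
  exact this ⟨g, hg, rfl⟩

lemma zpow_psi_mem_orbN (n : ℤ) {g : G} (hg : g ∈ orbN ψ) :
    ((ψ : MulAut G) ^ n) g ∈ orbN ψ := by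
  induction n using Int.induction_on with
  | zero => simpa using hg
  | succ n ih =>
      have : ((ψ : MulAut G) ^ ((n : ℤ) + 1)) g = ψ (((ψ : MulAut G) ^ (n:ℤ)) g) := by
        rw [add_comm, zpow_add, zpow_one]; rfl
      rw [this]; exact psi_mem_orbN ih
  | pred n ih =>
      have : ((ψ : MulAut G) ^ ((-n : ℤ) - 1)) g = ψ.symm (((ψ : MulAut G) ^ (-n:ℤ)) g) := by
        rw [sub_eq_add_neg, add_comm, zpow_add, zpow_neg, zpow_one]; rfl
      rw [this]; exact psi_symm_mem_orbN ih

lemma conj_mem_orbN {g : G} (hg : g ∈ orbN ψ) (x : G) : x * g * x⁻¹ ∈ orbN ψ := by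
  revert x
  refine Subgroup.closure_induction ?_ ?_ ?_ ?_ hg
  · rintro _ ⟨y, rfl⟩ x
    have key : x * (y * ψ y⁻¹) * x⁻¹ = (x*y * ψ (x*y)⁻¹) * (x * ψ x⁻¹)⁻¹ := by
      simp only [map_mul, map_inv, mul_inv_rev]
      group
    rw [key]
    exact mul_mem (Subgroup.subset_closure ⟨x*y, rfl⟩)
      (inv_mem (Subgroup.subset_closure ⟨x, rfl⟩))
  · intro x; simpa using one_mem _
  · intro a b _ _ ha hb x
    have : x * (a*b) * x⁻¹ = (x*a*x⁻¹) * (x*b*x⁻¹) := by group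
    rw [this]; exact mul_mem (ha x) (hb x)
  · intro a _ ha x
    have : x * a⁻¹ * x⁻¹ = (x*a*x⁻¹)⁻¹ := by group
    rw [this]; exact inv_mem (ha x)

lemma innOrbit_eq : innOrbit ψ = (orbN ψ : Set G) := by
  ext g
  constructor
  · rintro ⟨f, hf, rfl⟩
    -- every element of innGroup is of the form z ↦ g₀ * ψ^n z with g₀ ∈ orbN
    let T : Subgroup (Equiv.Perm G) :=
      { carrier := {f | ∃ g₀ ∈ orbN ψ, ∃ n : ℤ, ∀ x, f x = g₀ * ((ψ : MulAut G) ^ n) x}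
        one_mem' := ⟨1, one_mem _, 0, fun x => by simp⟩
        mul_mem' := by
          rintro f₁ f₂ ⟨g₁, hg₁, n₁, h₁⟩ ⟨g₂, hg₂, n₂, h₂⟩
          refine ⟨g₁ * ((ψ : MulAut G) ^ n₁) g₂, mul_mem hg₁ (zpow_psi_mem_orbN n₁ hg₂),
            n₁ + n₂, fun x => ?_⟩
          have : (f₁ * f₂) x = f₁ (f₂ x) := rfl
          rw [this, h₂, h₁, map_mul, zpow_add]
          simp [mul_assoc]
        inv_mem' := by
          rintro f ⟨g₀, hg₀, n, hf⟩
          refine ⟨((ψ : MulAut G) ^ (-n)) g₀⁻¹, zpow_psi_mem_orbN _ (inv_mem hg₀), -n,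
            fun x => ?_⟩
          apply f.injective
          have : f (f⁻¹ x) = x := f.apply_symm_apply x
          rw [this, hf, map_mul]
          have h1 : ((ψ : MulAut G) ^ n) (((ψ : MulAut G) ^ (-n)) g₀⁻¹) = g₀⁻¹ := by
            have : ((ψ : MulAut G) ^ n) (((ψ : MulAut G) ^ (-n)) g₀⁻¹)
                = (((ψ : MulAut G) ^ n) * ((ψ : MulAut G) ^ (-n))) g₀⁻¹ := rfl
            rw [this, ← zpow_add]
            simp
          have h2 : ((ψ : MulAut G) ^ n) (((ψ : MulAut G) ^ (-n)) x)
              = (((ψ : MulAut G) ^ n) * ((ψ : MulAut G) ^ (-n))) x := rfl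
          rw [h1, h2, ← zpow_add]
          simp }
    have hT : innGroup ψ ≤ T := by
      apply Subgroup.closure_le _ |>.2
      rintro _ ⟨y, rfl⟩
      exact ⟨y * ψ y⁻¹, Subgroup.subset_closure ⟨y, rfl⟩, 1, fun x => by
        rw [ptSym_apply, zpow_one]⟩
    obtain ⟨g₀, hg₀, n, hfx⟩ := hT hf
    have := hfx 1
    simp only [map_one, mul_one] at this
    rwa [this]
  · intro hg
    refine ⟨MulAction.toPermHom G G g, ?_, by simp⟩
    have : orbN ψ ≤ (innGroup ψ).comap (MulAction.toPermHom G G) := by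
      apply Subgroup.closure_le _ |>.2
      rintro _ ⟨y, rfl⟩
      have key : MulAction.toPermHom G G (y * ψ y⁻¹) = ptSym ψ y * (ptSym ψ 1)⁻¹ := by
        have h1 : ptSym ψ 1 = ψ.toEquiv := by
          ext x; simp [ptSym]
        rw [h1]
        ext x
        have : (ptSym ψ y * ψ.toEquiv⁻¹) x = ptSym ψ y (ψ.symm x) := rfl
        rw [this, ptSym_apply]
        simp [MulAction.toPermHom]
      rw [SetLike.mem_coe, Subgroup.mem_comap, key]
      exact mul_mem (Subgroup.subset_closure ⟨y, rfl⟩)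
        (inv_mem (Subgroup.subset_closure ⟨1, rfl⟩))
    exact this hg

end Aux

section Aux2

variable {G : Type*} [Group G] {ψ : G ≃* G}

lemma gaOp_one (y : G) : gaOp ψ 1 y = y * ψ y⁻¹ := by simp [gaOp]

lemma c_mem_innOrbit (y : G) : y * ψ y⁻¹ ∈ innOrbit ψ := by
  rw [innOrbit_eq]; exact Subgroup.subset_closure ⟨y, rfl⟩

lemma one_mem_innOrbit : (1 : G) ∈ innOrbit ψ := by
  rw [innOrbit_eq]; exact one_mem _

lemma mul_mem_innOrbit {p q : G} (hp : p ∈ innOrbit ψ) (hq : q ∈ innOrbit ψ) :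
    p * q ∈ innOrbit ψ := by
  rw [innOrbit_eq] at *; exact mul_mem hp hq

lemma inv_mem_innOrbit {p : G} (hp : p ∈ innOrbit ψ) : p⁻¹ ∈ innOrbit ψ := by
  rw [innOrbit_eq] at *; exact inv_mem hp

lemma conj_mem_innOrbit {p : G} (hp : p ∈ innOrbit ψ) (x : G) :
    x * p * x⁻¹ ∈ innOrbit ψ := by
  rw [innOrbit_eq] at *; exact conj_mem_orbN hp x

lemma psi_mem_innOrbit {p : G} (hp : p ∈ innOrbit ψ) : ψ p ∈ innOrbit ψ := by
  rw [innOrbit_eq] at *; exact psi_mem_orbN hp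

/-- A set of coset representatives always exists. -/
lemma exists_isCosetRep : ∃ A : Set G, IsCosetRep A (innOrbit ψ) := by
  classical
  refine ⟨Set.range (fun q : G ⧸ orbN ψ => q.out), fun x => ?_⟩
  refine ⟨(QuotientGroup.mk x : G ⧸ orbN ψ).out, ⟨⟨_, rfl⟩, (QuotientGroup.mk x : G ⧸ orbN ψ).out⁻¹ * x, ?_, by group⟩, ?_⟩
  · rw [innOrbit_eq, SetLike.mem_coe, ← QuotientGroup.eq, QuotientGroup.out_eq']
  · rintro a ⟨⟨q, rfl⟩, p, hp, rfl⟩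
    rw [innOrbit_eq, SetLike.mem_coe] at hp
    have : (QuotientGroup.mk (q.out * p) : G ⧸ orbN ψ) = q := by
      rw [← QuotientGroup.out_eq' q, QuotientGroup.eq, QuotientGroup.out_eq']
      simpa using hp
    rw [this]

end Aux2

section Aux3

variable {G G' : Type*} [Group G] [Group G'] {ψ : G ≃* G} {ψ' : G' ≃* G'}
variable {F : G → G'}

lemma gaOp_eq (x y : G) : gaOp ψ x y = (y * ψ y⁻¹) * ψ x := by
  simp [gaOp, map_mul, mul_assoc]

lemma norm_psi (hhom : ∀ x y : G, F (gaOp ψ x y) = gaOp ψ' (F x) (F y))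
    (h1 : F 1 = 1) (x : G) : F (ψ x) = ψ' (F x) := by
  have := hhom x 1
  simpa [gaOp, h1] using this

lemma norm_cz (hhom : ∀ x y : G, F (gaOp ψ x y) = gaOp ψ' (F x) (F y))
    (h1 : F 1 = 1) (y z : G) :
    F ((y * ψ y⁻¹) * z) = (F y * ψ' (F y)⁻¹) * F z := by
  have := hhom (ψ.symm z) y
  rw [gaOp_eq, gaOp_eq] at this
  rw [ψ.apply_symm_apply] at this
  rw [this, ← norm_psi hhom h1 (ψ.symm z), ψ.apply_symm_apply]

lemma norm_c (hhom : ∀ x y : G, F (gaOp ψ x y) = gaOp ψ' (F x) (F y))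
    (h1 : F 1 = 1) (y : G) :
    F (y * ψ y⁻¹) = F y * ψ' (F y)⁻¹ := by
  have := norm_cz hhom h1 y 1
  simpa [h1] using this

/-- Multiplicativity on the orbit subgroup, and that `F` maps the orbit into the orbit. -/
lemma norm_orbit (hhom : ∀ x y : G, F (gaOp ψ x y) = gaOp ψ' (F x) (F y))
    (h1 : F 1 = 1) {p : G} (hp : p ∈ innOrbit ψ) :
    (∀ z, F (p * z) = F p * F z) ∧ F p ∈ innOrbit ψ' := by
  let K : Subgroup G :=
    { carrier := {p | (∀ z, F (p * z) = F p * F z) ∧ F p ∈ innOrbit ψ'}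
      one_mem' := ⟨fun z => by simp [h1], h1 ▸ one_mem_innOrbit⟩
      mul_mem' := by
        rintro a b ⟨ha, ha'⟩ ⟨hb, hb'⟩
        have hab : ∀ z, F (a * b * z) = F a * F b * F z := fun z => by
          rw [mul_assoc, ha, hb, mul_assoc]
        have habm : F (a * b) = F a * F b := by
          have := hab 1; simpa [h1] using this
        exact ⟨fun z => by rw [hab z, habm], habm ▸ mul_mem_innOrbit ha' hb'⟩
      inv_mem' := by
        rintro a ⟨ha, ha'⟩
        have hinv : ∀ z, F (a⁻¹ * z) = (F a)⁻¹ * F z := by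
          intro z
          have := ha (a⁻¹ * z)
          rw [mul_inv_cancel_left] at this
          rw [this]; group
        have hm : F a⁻¹ = (F a)⁻¹ := by have := hinv 1; simpa [h1] using this
        exact ⟨fun z => by rw [hinv z, hm], hm ▸ inv_mem_innOrbit ha'⟩ }
  have hK : innOrbit ψ ⊆ (K : Set G) := by
    rw [innOrbit_eq]
    apply Subgroup.closure_le K |>.2
    rintro _ ⟨y, rfl⟩
    exact ⟨fun z => by rw [norm_cz hhom h1 y z, norm_c hhom h1 y],
      norm_c hhom h1 y ▸ c_mem_innOrbit (F y)⟩
  exact hK hp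

end Aux3

section Fwd

variable {G G' : Type*} [Group G] [Group G'] {ψ : G ≃* G} {ψ' : G' ≃* G'}

lemma gaOp_mul_left (g u v : G') : gaOp ψ' (g * u) (g * v) = g * gaOp ψ' u v := by
  simp [gaOp, map_mul, mul_assoc]

lemma fwd_direction
    (f : G → G') (hbij : Function.Bijective f)
    (hhom : ∀ x y : G, f (gaOp ψ x y) = gaOp ψ' (f x) (f y)) :
    (∃ (h : G → G') (k : G → G') (A : Set G) (A' : Set G'),
        IsCosetRep A (innOrbit ψ) ∧ IsCosetRep A' (innOrbit ψ') ∧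
        Set.BijOn h (innOrbit ψ) (innOrbit ψ') ∧
        (∀ p ∈ innOrbit ψ, ∀ q ∈ innOrbit ψ, h (p * q) = h p * h q) ∧
        (∀ p ∈ innOrbit ψ, h (ψ p) = ψ' (h p)) ∧
        Set.BijOn k A A' ∧
        ∀ a ∈ A, h (gaOp ψ 1 a) = gaOp ψ' 1 (k a)) := by
  classical
  -- normalize
  set F : G → G' := fun x => (f 1)⁻¹ * f x with hF
  have hFbij : Function.Bijective F := by
    exact (Equiv.mulLeft (f 1)⁻¹).bijective.comp hbij
  have hF1 : F 1 = 1 := by simp [hF]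
  have hFhom : ∀ x y : G, F (gaOp ψ x y) = gaOp ψ' (F x) (F y) := by
    intro x y
    have : gaOp ψ' (F x) (F y) = (f 1)⁻¹ * gaOp ψ' (f x) (f y) := by
      rw [hF]; rw [← gaOp_mul_left]
    rw [this, ← hhom]
  set E := Equiv.ofBijective F hFbij with hE
  have hEapp : ∀ x, E x = F x := fun _ => rfl
  have hFinvhom : ∀ x y : G', E.symm (gaOp ψ' x y) = gaOp ψ (E.symm x) (E.symm y) := by
    intro x y
    apply E.injective
    have h2 : ∀ z : G', F (E.symm z) = z := fun z => E.apply_symm_apply z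
    rw [Equiv.apply_symm_apply, hEapp, hFhom, h2, h2]
  have hFinv1 : E.symm 1 = 1 := by
    apply E.injective; rw [Equiv.apply_symm_apply, hEapp, hF1]
  -- orbit facts
  have hmulF : ∀ p ∈ innOrbit ψ, ∀ z, F (p * z) = F p * F z :=
    fun p hp => (norm_orbit hFhom hF1 hp).1
  have hmapF : ∀ p ∈ innOrbit ψ, F p ∈ innOrbit ψ' :=
    fun p hp => (norm_orbit hFhom hF1 hp).2
  have hmapFinv : ∀ q ∈ innOrbit ψ', E.symm q ∈ innOrbit ψ :=
    fun q hq => (norm_orbit hFinvhom hFinv1 hq).2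
  have hsurjF : Set.SurjOn F (innOrbit ψ) (innOrbit ψ') := by
    intro q hq
    exact ⟨E.symm q, hmapFinv q hq, by rw [← hEapp, Equiv.apply_symm_apply]⟩
  obtain ⟨A, hA⟩ := exists_isCosetRep (ψ := ψ)
  refine ⟨F, F, A, F '' A, hA, ?_, ⟨fun p hp => hmapF p hp, hFbij.injective.injOn, hsurjF⟩,
    fun p hp q _ => by
      have := hmulF p hp q; simpa using this,
    fun p _ => norm_psi hFhom hF1 p,
    hFbij.injective.injOn.bijOn_image, fun a _ => by
      rw [gaOp_one, gaOp_one, norm_c hFhom hF1]⟩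
  -- F '' A is a set of coset representatives
  intro x'
  obtain ⟨a, ⟨haA, p, hp, hxap⟩, huniq⟩ := hA (E.symm x')
  have hxap' : x' = F (a * p) := by
    rw [← hxap, ← hEapp, Equiv.apply_symm_apply]
  have hconj : a * p * a⁻¹ ∈ innOrbit ψ := conj_mem_innOrbit hp a
  have hFap : F (a * p) = F (a * p * a⁻¹) * F a := by
    have := hmulF _ hconj a
    rw [← this]; congr 1; group
  refine ⟨F a, ⟨⟨a, haA, rfl⟩, (F a)⁻¹ * (F (a * p * a⁻¹) * F a), ?_, ?_⟩, ?_⟩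
  · have := conj_mem_innOrbit (hmapF _ hconj) (F a)⁻¹
    simpa [mul_assoc] using this
  · rw [hxap', hFap]; group
  · rintro a₂' ⟨⟨a₂, ha₂A, rfl⟩, p'', hp'', hx2⟩
    -- rewrite x' = F a₂ * p'' as F (p₂ * a₂)
    have hw₂ : F a₂ * p'' * (F a₂)⁻¹ ∈ innOrbit ψ' := conj_mem_innOrbit hp'' (F a₂)
    obtain ⟨p₂, hp₂, hFp₂⟩ := hsurjF hw₂
    have hx2' : x' = F (p₂ * a₂) := by
      rw [hmulF p₂ hp₂ a₂, hFp₂, hx2]; group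
    have heq : p₂ * a₂ = a * p := by
      apply hFbij.injective
      rw [← hx2', hxap']
    have : a₂ = a := by
      apply huniq
      refine ⟨ha₂A, a₂⁻¹ * p₂ * a₂, ?_, ?_⟩
      · have := conj_mem_innOrbit hp₂ a₂⁻¹
        simpa [mul_assoc] using this
      · rw [hxap, ← heq]; group
    rw [this]

end Fwd

section Bwd

variable {G : Type*} [Group G]

/-- The representative of `x` given a set of coset representatives. -/
noncomputable def repFn {A P : Set G} (hA : IsCosetRep A P) (x : G) : G :=
  (hA x).choose

lemma repFn_mem {A P : Set G} (hA : IsCosetRep A P) (x : G) : repFn hA x ∈ A :=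
  (hA x).choose_spec.1.1

lemma repFn_fac {A P : Set G} (hA : IsCosetRep A P) (x : G) : (repFn hA x)⁻¹ * x ∈ P := by
  obtain ⟨p, hp, hx⟩ := (hA x).choose_spec.1.2
  have hx' : x = repFn hA x * p := hx
  nth_rewrite 2 [hx']
  rw [inv_mul_cancel_left]
  exact hp

lemma repFn_eq {A P : Set G} (hA : IsCosetRep A P) {x a : G} (ha : a ∈ A)
    (hp : a⁻¹ * x ∈ P) : repFn hA x = a :=
  ((hA x).choose_spec.2 a ⟨ha, a⁻¹ * x, hp, by group⟩).symm

variable {G' : Type*} [Group G'] {ψ : G ≃* G} {ψ' : G' ≃* G'}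

lemma bwd_direction (h k : G → G') {A : Set G} {A' : Set G'}
    (hA : IsCosetRep A (innOrbit ψ)) (hA' : IsCosetRep A' (innOrbit ψ'))
    (hbij : Set.BijOn h (innOrbit ψ) (innOrbit ψ'))
    (hmul : ∀ p ∈ innOrbit ψ, ∀ q ∈ innOrbit ψ, h (p * q) = h p * h q)
    (hpsi : ∀ p ∈ innOrbit ψ, h (ψ p) = ψ' (h p))
    (hkbij : Set.BijOn k A A')
    (hck : ∀ a ∈ A, h (gaOp ψ 1 a) = gaOp ψ' 1 (k a)) :
    ∃ f : G → G', Function.Bijective f ∧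
      ∀ x y : G, f (gaOp ψ x y) = gaOp ψ' (f x) (f y) := by
  classical
  set P := innOrbit ψ with hP
  set P' := innOrbit ψ' with hP'
  -- basic consequences
  have h1 : h 1 = 1 := by
    have := hmul 1 one_mem_innOrbit 1 one_mem_innOrbit
    rw [mul_one] at this
    exact (mul_eq_left.1 this.symm)
  have hinv : ∀ p ∈ P, h p⁻¹ = (h p)⁻¹ := by
    intro p hp
    have := hmul p⁻¹ (inv_mem_innOrbit hp) p hp
    rw [inv_mul_cancel, h1] at this
    exact eq_inv_of_mul_eq_one_left this.symm
  have hckA : ∀ a ∈ A, h (a * ψ a⁻¹) = k a * ψ' (k a)⁻¹ := by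
    intro a ha
    have := hck a ha
    rwa [gaOp_one, gaOp_one] at this
  set f : G → G' := fun x => h (x * (repFn hA x)⁻¹) * k (repFn hA x) with hf
  -- decomposition facts
  have hxfac : ∀ x : G, x * (repFn hA x)⁻¹ ∈ P := by
    intro x
    have := conj_mem_innOrbit (repFn_fac hA x) (repFn hA x)
    have e : repFn hA x * ((repFn hA x)⁻¹ * x) * (repFn hA x)⁻¹ = x * (repFn hA x)⁻¹ := by
      group
    rwa [e] at this
  refine ⟨f, ⟨?_, ?_⟩, ?_⟩
  · -- injective
    intro x y hxy
    set a := repFn hA x with hadef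
    set b := repFn hA y with hbdef
    have hpx := hxfac x
    have hpy := hxfac y
    have hka : k a ∈ A' := hkbij.1 (repFn_mem hA x)
    have hkb : k b ∈ A' := hkbij.1 (repFn_mem hA y)
    have hu := hA' (f x)
    obtain ⟨c, -, hcu⟩ := hu
    have hca : c = k a := by
      symm; apply hcu
      refine ⟨hka, (k a)⁻¹ * h (x * a⁻¹) * k a, ?_, ?_⟩
      · have := conj_mem_innOrbit (hbij.1 hpx) (k a)⁻¹
        simpa [mul_assoc] using this
      · rw [hf]; group; rfl
    have hcb : c = k b := by
      symm; apply hcu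
      refine ⟨hkb, (k b)⁻¹ * h (y * b⁻¹) * k b, ?_, ?_⟩
      · have := conj_mem_innOrbit (hbij.1 hpy) (k b)⁻¹
        simpa [mul_assoc] using this
      · rw [hxy, hf]; group; rfl
    have hkab : k a = k b := by rw [← hca, ← hcb]
    have hab : a = b := hkbij.2.1 (repFn_mem hA x) (repFn_mem hA y) hkab
    have hpq : h (x * a⁻¹) = h (y * b⁻¹) := by
      have : h (x * a⁻¹) * k a = h (y * b⁻¹) * k b := hxy
      rw [hkab] at this
      exact mul_right_cancel this
    have : x * a⁻¹ = y * b⁻¹ := hbij.2.1 hpx hpy hpq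
    calc x = (x * a⁻¹) * a := by group
    _ = (y * b⁻¹) * b := by rw [this, hab]
    _ = y := by group
  · -- surjective
    intro x'
    set a' := repFn hA' x' with ha'def
    have hp' : a'⁻¹ * x' ∈ P' := repFn_fac hA' x'
    obtain ⟨a, haA, hka⟩ := hkbij.2.2 (repFn_mem hA' x')
    have hw' : a' * (a'⁻¹ * x') * a'⁻¹ ∈ P' := conj_mem_innOrbit hp' a'
    obtain ⟨p, hpP, hhp⟩ := hbij.2.2 hw'
    refine ⟨p * a, ?_⟩
    have hrep : repFn hA (p * a) = a := by
      apply repFn_eq hA haA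
      have := conj_mem_innOrbit hpP a⁻¹
      simpa [mul_assoc] using this
    rw [hf]
    simp only [hrep]
    have e : p * a * a⁻¹ = p := by group
    rw [e, hhp, hka]
    group
    rw [← ha'def]; group
  · -- homomorphism
    intro x y
    set a := repFn hA x with hadef
    set b := repFn hA y with hbdef
    have haA := repFn_mem hA x
    have hbA := repFn_mem hA y
    set p := x * a⁻¹ with hpdef
    set q := y * b⁻¹ with hqdef
    have hp : p ∈ P := hxfac x
    have hq : q ∈ P := hxfac y
    have hψx : ψ x = ψ p * ψ a := by rw [← map_mul]; congr 1; rw [hpdef]; group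
    -- representative of gaOp ψ x y is a
    have hrepz : repFn hA (gaOp ψ x y) = a := by
      apply repFn_eq hA haA
      have e : a⁻¹ * gaOp ψ x y
          = (a⁻¹ * ((y * ψ y⁻¹) * ψ p) * (a⁻¹)⁻¹) * (a⁻¹ * ψ (a⁻¹)⁻¹) := by
        rw [gaOp_eq, hψx]; group
      rw [e]
      exact mul_mem_innOrbit
        (conj_mem_innOrbit (mul_mem_innOrbit (c_mem_innOrbit y) (psi_mem_innOrbit hp)) a⁻¹)
        (c_mem_innOrbit a⁻¹)
    -- memberships of the atoms
    have hca : a * ψ a⁻¹ ∈ P := c_mem_innOrbit a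
    have hcb : b * ψ b⁻¹ ∈ P := c_mem_innOrbit b
    have hcq : q * ψ q⁻¹ ∈ P := c_mem_innOrbit q
    have hψp : ψ p ∈ P := psi_mem_innOrbit hp
    have hψq : ψ q ∈ P := psi_mem_innOrbit hq
    -- left side
    have hza : gaOp ψ x y * a⁻¹ = ((y * ψ y⁻¹) * ψ p) * (a * ψ a⁻¹)⁻¹ := by
      rw [gaOp_eq, hψx]; simp only [map_inv]; group
    have hcy : y * ψ y⁻¹ = ((q * (b * ψ b⁻¹)) * q⁻¹) * (q * ψ q⁻¹) := by
      have hy : y = q * b := by rw [hqdef]; group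
      rw [hy]
      simp only [map_mul, map_inv, mul_inv_rev]
      group
    have e2 : h (y * ψ y⁻¹) = h q * h (b * ψ b⁻¹) * (h q)⁻¹ * h (q * ψ q⁻¹) := by
      rw [hcy,
        hmul _ (mul_mem_innOrbit (mul_mem_innOrbit hq hcb) (inv_mem_innOrbit hq)) _ hcq,
        hmul _ (mul_mem_innOrbit hq hcb) _ (inv_mem_innOrbit hq),
        hmul _ hq _ hcb, hinv _ hq]
    have e1 : h (gaOp ψ x y * a⁻¹)
        = h (y * ψ y⁻¹) * h (ψ p) * (h (a * ψ a⁻¹))⁻¹ := by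
      rw [hza,
        hmul _ (mul_mem_innOrbit (c_mem_innOrbit y) hψp) _ (inv_mem_innOrbit hca),
        hmul _ (c_mem_innOrbit y) _ hψp, hinv _ hca]
    have hcq_eq : h (q * ψ q⁻¹) = h q * (h (ψ q))⁻¹ := by
      rw [hmul _ hq _ (psi_mem_innOrbit (inv_mem_innOrbit hq)), map_inv,
        hinv _ hψq]
    -- the two ψ'∘k relations
    have hkarel : ψ' (k a) = (h (a * ψ a⁻¹))⁻¹ * k a := by
      rw [hckA a haA]; simp only [map_inv]; group
    have hkbrel : (ψ' (k b))⁻¹ = (k b)⁻¹ * h (b * ψ b⁻¹) := by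
      rw [hckA b hbA]; simp only [map_inv]; group
    -- put everything together
    have hfz : f (gaOp ψ x y) = h (gaOp ψ x y * a⁻¹) * k a := by
      simp only [hf, hrepz]
    have hfx : f x = h p * k a := by
      simp only [hf, ← hadef, ← hpdef]
    have hfy : f y = h q * k b := by
      simp only [hf, ← hbdef, ← hqdef]
    rw [hfz, e1, e2, hcq_eq, gaOp_eq, hfx, hfy]
    simp only [map_mul, map_inv, mul_inv_rev, ← hpsi p hp, ← hpsi q hq]
    rw [hkarel, hkbrel]
    simp only [map_inv]
    group

end Bwd

theorem main_characterization {G G' : Type*} [Group G] [Group G']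
    (ψ : G ≃* G) (ψ' : G' ≃* G') :
    (∃ f : G → G', Function.Bijective f ∧
        ∀ x y : G, f (gaOp ψ x y) = gaOp ψ' (f x) (f y)) ↔
      (∃ (h : G → G') (k : G → G') (A : Set G) (A' : Set G'),
        IsCosetRep A (innOrbit ψ) ∧ IsCosetRep A' (innOrbit ψ') ∧
        Set.BijOn h (innOrbit ψ) (innOrbit ψ') ∧
        (∀ p ∈ innOrbit ψ, ∀ q ∈ innOrbit ψ, h (p * q) = h p * h q) ∧
        (∀ p ∈ innOrbit ψ, h (ψ p) = ψ' (h p)) ∧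
        Set.BijOn k A A' ∧
        ∀ a ∈ A, h (gaOp ψ 1 a) = gaOp ψ' 1 (k a)) := by
  constructor
  · rintro ⟨f, hbij, hhom⟩
    exact fwd_direction f hbij hhom
  · rintro ⟨h, k, A, A', hA, hA', hbij, hmul, hpsi, hkbij, hck⟩
    exact bwd_direction h k hA hA' hbij hmul hpsi hkbij hck
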